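/- Let Δt ∈ (0, 1/2], and let (z_n) be a sequence of real numbers with z_0 = 0 satisfying z_n = z_{n-1} + Δt·ĝ_n·(s_n - z_{n-1}) for all n ≥ 1, where ĝ_n ∈ [0,1] and s_n ∈ [-1,1]. Then for all n ≥ 1, z_n² ≤ n·Δt·(1 + 2Δt), and hence |z_n| ≤ √(t_n(1+2Δt)) with t_n = n·Δt. -/
import Mathlib

lemma step_sq (Δt a z s : ℝ) (hΔt : 0 < Δt) (hΔt2 : Δt ≤ 1 / 2)
    (ha0 : 0 ≤ a) (ha1 : a ≤ Δt) (hz : |z| ≤ 1) (hs1 : -1 ≤ s) (hs2 : s ≤ 1) :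
    (z + a * (s - z)) ^ 2 ≤ z ^ 2 + Δt * (1 + 2 * Δt) := by
  have hz1 : -1 ≤ z := neg_le_of_abs_le hz
  have hz2 : z ≤ 1 := le_of_abs_le hz
  nlinarith [mul_nonneg ha0 (sq_nonneg (3 * z - s)),
    mul_nonneg ha0 (mul_nonneg (by linarith : (0:ℝ) ≤ 1 - s) (by linarith : (0:ℝ) ≤ 1 + s)),
    mul_nonneg (mul_nonneg ha0 (by linarith : (0:ℝ) ≤ 1 / 2 - a)) (sq_nonneg (s - z))]

lemma step_abs (a z s : ℝ) (ha0 : 0 ≤ a) (ha1 : a ≤ 1) (hz : |z| ≤ 1)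
    (hs1 : -1 ≤ s) (hs2 : s ≤ 1) : |z + a * (s - z)| ≤ 1 := by
  have hz1 : -1 ≤ z := neg_le_of_abs_le hz
  have hz2 : z ≤ 1 := le_of_abs_le hz
  rw [abs_le]
  constructor <;> nlinarith

theorem stmt_2 (Δt : ℝ) (hΔt : 0 < Δt) (hΔt2 : Δt ≤ 1 / 2)
    (z g s : ℕ → ℝ) (hz0 : z 0 = 0)
    (hrec : ∀ n : ℕ, z (n + 1) = z n + Δt * g (n + 1) * (s (n + 1) - z n))
    (hg : ∀ n : ℕ, 1 ≤ n → g n ∈ Set.Icc (0 : ℝ) 1)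
    (hs : ∀ n : ℕ, 1 ≤ n → s n ∈ Set.Icc (-1 : ℝ) 1) :
    ∀ n : ℕ, 1 ≤ n →
      (z n) ^ 2 ≤ n * Δt * (1 + 2 * Δt) ∧
      |z n| ≤ Real.sqrt ((n * Δt) * (1 + 2 * Δt)) := by
  have key : ∀ n : ℕ, |z n| ≤ 1 ∧ (z n) ^ 2 ≤ n * Δt * (1 + 2 * Δt) := by
    intro n
    induction n with
    | zero => simp [hz0]
    | succ n ih =>
      obtain ⟨hb, hsq⟩ := ih
      have hgn := hg (n + 1) (Nat.le_add_left 1 n)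
      have hsn := hs (n + 1) (Nat.le_add_left 1 n)
      obtain ⟨hg1, hg2⟩ := hgn
      obtain ⟨hs1, hs2⟩ := hsn
      have ha0 : 0 ≤ Δt * g (n + 1) := mul_nonneg hΔt.le hg1
      have ha1 : Δt * g (n + 1) ≤ Δt := by nlinarith
      have hrw : z (n + 1) = z n + (Δt * g (n + 1)) * (s (n + 1) - z n) := hrec n
      constructor
      · rw [hrw]
        exact step_abs _ _ _ ha0 (by linarith) hb hs1 hs2
      · have h1 : (z (n + 1)) ^ 2 ≤ (z n) ^ 2 + Δt * (1 + 2 * Δt) := by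
          rw [hrw]; exact step_sq Δt _ _ _ hΔt hΔt2 ha0 ha1 hb hs1 hs2
        have : ((n : ℝ) + 1) * Δt * (1 + 2 * Δt) = n * Δt * (1 + 2 * Δt) + Δt * (1 + 2 * Δt) := by
          ring
        push_cast
        linarith
  intro n hn
  have h := (key n).2
  refine ⟨h, ?_⟩
  rw [show ((n : ℝ) * Δt) * (1 + 2 * Δt) = n * Δt * (1 + 2 * Δt) by ring]
  have := Real.sqrt_le_sqrt (show (z n) ^ 2 ≤ n * Δt * (1 + 2 * Δt) from h)
  calc |z n| = Real.sqrt ((z n) ^ 2) := by rw [Real.sqrt_sq_eq_abs]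
    _ ≤ _ := this
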